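/- arXiv:2504.09417 — 2 statements merged into one kernel-verified Lean document; each statement's English description precedes it below -/
import Mathlib

section
/- Let Ω(t) = a·cos(ωt+φ), u(t) = b·cos(ωt) and v(t) = c·sin(ωt+φ) + d·cos(ωt+φ) with T = 2π/ω. Then the averaged Lie-bracket correction (1/(2T))·∫₀^T∫₀^{t₁} [A(t₁),A(t₂)] dt₂ dt₁, with A(t) ∈ se(2) having angular part Ω and translational part (u,v), has zero angular component, and its translational component can be computed in closed form as a bilinear expression in (a,b,c,d) involving sin φ and cos φ; in particular it vanishes identically when a = 0. -/
open Real MeasureTheory intervalIntegral Matrix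

attribute [local instance] Matrix.normedAddCommGroup Matrix.normedSpace

private lemma comm_decomp (Om u v : ℝ → ℝ) (A : ℝ → Matrix (Fin 3) (Fin 3) ℝ)
    (hA : ∀ t, A t = !![0, Om t, u t; -(Om t), 0, v t; 0, 0, 0]) (t₁ t₂ : ℝ) :
    A t₁ * A t₂ - A t₂ * A t₁ =
      (Om t₁ * v t₂ - Om t₂ * v t₁) • (!![0,0,1;0,0,0;0,0,0] : Matrix (Fin 3) (Fin 3) ℝ) +
      (Om t₂ * u t₁ - Om t₁ * u t₂) • (!![0,0,0;0,0,1;0,0,0] : Matrix (Fin 3) (Fin 3) ℝ) := by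
  rw [hA, hA]
  ext i j
  fin_cases i <;> fin_cases j <;>
    simp [Matrix.mul_apply, Fin.sum_univ_three, Matrix.vecHead, Matrix.vecTail] <;> ring

/-- for the `se(2)`-valued path `A(t)` with angular part
`Ω(t) = a cos(ωt+φ)` and translational part
`(u,v) = (b cos(ωt), c sin(ωt+φ) + d cos(ωt+φ))`, the averaged Lie-bracket
(second Magnus) correction `M = (1/(2T)) ∫₀^T ∫₀^{t₁} [A(t₁),A(t₂)] dt₂ dt₁`
has zero angular component, and it vanishes identically when `a = 0`. -/
theorem magnus_second_order_correction (a b c d ω φ T : ℝ)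
    (hω : 0 < ω) (hT : T = 2 * π / ω)
    (A : ℝ → Matrix (Fin 3) (Fin 3) ℝ)
    (hA : ∀ t, A t =
      !![0, a * Real.cos (ω * t + φ), b * Real.cos (ω * t);
         -(a * Real.cos (ω * t + φ)), 0,
           c * Real.sin (ω * t + φ) + d * Real.cos (ω * t + φ);
         0, 0, 0])
    (M : Matrix (Fin 3) (Fin 3) ℝ)
    (hM : M = (1 / (2 * T)) •
      ∫ t₁ in (0:ℝ)..T, ∫ t₂ in (0:ℝ)..t₁, (A t₁ * A t₂ - A t₂ * A t₁)) :
    M 0 1 = 0 ∧ M 1 0 = 0 ∧ (a = 0 → M = 0) := by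
  set Om : ℝ → ℝ := fun t => a * Real.cos (ω * t + φ) with hOm
  set u : ℝ → ℝ := fun t => b * Real.cos (ω * t) with hu
  set v : ℝ → ℝ := fun t => c * Real.sin (ω * t + φ) + d * Real.cos (ω * t + φ) with hv
  have hA' : ∀ t, A t = !![0, Om t, u t; -(Om t), 0, v t; 0, 0, 0] := hA
  have hOmc : Continuous Om := by fun_prop
  have huc : Continuous u := by fun_prop
  have hvc : Continuous v := by fun_prop
  set E02 : Matrix (Fin 3) (Fin 3) ℝ := !![0,0,1;0,0,0;0,0,0] with hE02
  set E12 : Matrix (Fin 3) (Fin 3) ℝ := !![0,0,0;0,0,1;0,0,0] with hE12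
  set P : ℝ → ℝ := fun t => ∫ s in (0:ℝ)..t, Om s with hP
  set U : ℝ → ℝ := fun t => ∫ s in (0:ℝ)..t, u s with hU
  set V : ℝ → ℝ := fun t => ∫ s in (0:ℝ)..t, v s with hV
  have hPc : Continuous P :=
    intervalIntegral.continuous_primitive (fun a b => (hOmc.intervalIntegrable a b)) 0
  have hUc : Continuous U :=
    intervalIntegral.continuous_primitive (fun a b => (huc.intervalIntegrable a b)) 0
  have hVc : Continuous V :=
    intervalIntegral.continuous_primitive (fun a b => (hvc.intervalIntegrable a b)) 0
  set G : ℝ → ℝ := fun t => Om t * V t - v t * P t with hG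
  set H : ℝ → ℝ := fun t => P t * u t - Om t * U t with hH
  have hGc : Continuous G := by fun_prop
  have hHc : Continuous H := by fun_prop
  have hinner : ∀ t₁ : ℝ, (∫ t₂ in (0:ℝ)..t₁, (A t₁ * A t₂ - A t₂ * A t₁)) =
      G t₁ • E02 + H t₁ • E12 := by
    intro t₁
    have h1 : ∀ t₂, A t₁ * A t₂ - A t₂ * A t₁ =
        (Om t₁ * v t₂ - Om t₂ * v t₁) • E02 + (Om t₂ * u t₁ - Om t₁ * u t₂) • E12 :=
      fun t₂ => comm_decomp Om u v A hA' t₁ t₂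
    have i1 : IntervalIntegrable (fun t₂ => Om t₁ * v t₂ - Om t₂ * v t₁) volume 0 t₁ := by
      apply Continuous.intervalIntegrable; fun_prop
    have i2 : IntervalIntegrable (fun t₂ => Om t₂ * u t₁ - Om t₁ * u t₂) volume 0 t₁ := by
      apply Continuous.intervalIntegrable; fun_prop
    calc (∫ t₂ in (0:ℝ)..t₁, (A t₁ * A t₂ - A t₂ * A t₁))
        = ∫ t₂ in (0:ℝ)..t₁, ((Om t₁ * v t₂ - Om t₂ * v t₁) • E02
            + (Om t₂ * u t₁ - Om t₁ * u t₂) • E12) := by simp_rw [h1]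
      _ = (∫ t₂ in (0:ℝ)..t₁, (Om t₁ * v t₂ - Om t₂ * v t₁)) • E02
            + (∫ t₂ in (0:ℝ)..t₁, (Om t₂ * u t₁ - Om t₁ * u t₂)) • E12 := by
          rw [intervalIntegral.integral_add (by apply Continuous.intervalIntegrable; fun_prop) (by apply Continuous.intervalIntegrable; fun_prop),
            intervalIntegral.integral_smul_const, intervalIntegral.integral_smul_const]
      _ = G t₁ • E02 + H t₁ • E12 := by
          have e1 : (∫ t₂ in (0:ℝ)..t₁, (Om t₁ * v t₂ - Om t₂ * v t₁)) = G t₁ := by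
            rw [intervalIntegral.integral_sub (by apply Continuous.intervalIntegrable; fun_prop)
              (by apply Continuous.intervalIntegrable; fun_prop)]
            simp only [intervalIntegral.integral_const_mul, intervalIntegral.integral_mul_const,
              hG, hP, hV]
            try ring
          have e2 : (∫ t₂ in (0:ℝ)..t₁, (Om t₂ * u t₁ - Om t₁ * u t₂)) = H t₁ := by
            rw [intervalIntegral.integral_sub (by apply Continuous.intervalIntegrable; fun_prop)
              (by apply Continuous.intervalIntegrable; fun_prop)]
            simp only [intervalIntegral.integral_const_mul, intervalIntegral.integral_mul_const,
              hH, hP, hU]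
            try ring
          rw [e1, e2]
  have houter : (∫ t₁ in (0:ℝ)..T, ∫ t₂ in (0:ℝ)..t₁, (A t₁ * A t₂ - A t₂ * A t₁)) =
      (∫ t₁ in (0:ℝ)..T, G t₁) • E02 + (∫ t₁ in (0:ℝ)..T, H t₁) • E12 := by
    calc (∫ t₁ in (0:ℝ)..T, ∫ t₂ in (0:ℝ)..t₁, (A t₁ * A t₂ - A t₂ * A t₁))
        = ∫ t₁ in (0:ℝ)..T, (G t₁ • E02 + H t₁ • E12) := by simp_rw [hinner]
      _ = (∫ t₁ in (0:ℝ)..T, G t₁) • E02 + (∫ t₁ in (0:ℝ)..T, H t₁) • E12 := by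
          rw [intervalIntegral.integral_add (by apply Continuous.intervalIntegrable; fun_prop) (by apply Continuous.intervalIntegrable; fun_prop),
            intervalIntegral.integral_smul_const, intervalIntegral.integral_smul_const]
  rw [houter] at hM
  refine ⟨?_, ?_, ?_⟩
  · rw [hM]
    simp [hE02, hE12, Matrix.smul_apply, Matrix.add_apply]
  · rw [hM]
    simp [hE02, hE12, Matrix.smul_apply, Matrix.add_apply]
  · intro ha
    have hOm0 : Om = fun _ => 0 := by funext t; simp [hOm, ha]
    have hG0 : ∀ t, G t = 0 := by
      intro t
      simp [hG, hP, hOm0]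
    have hH0 : ∀ t, H t = 0 := by
      intro t
      simp [hH, hP, hOm0]
    rw [hM]
    simp [intervalIntegral.integral_congr (g := fun _ => (0:ℝ)) (fun t _ => hG0 t),
      intervalIntegral.integral_congr (g := fun _ => (0:ℝ)) (fun t _ => hH0 t)]
end

section
/- Let A, B : ℝ → M₃(ℝ) with A(t) the se(2) matrix of twist (u(t), v(t), Ω(t)). For the uniform-compression gait, the second-order averaged angular velocity ⟨Ω⁽²⁾⟩ = (1/T)·∫₀^T (18εηω/(k²L₀²))·((γ−1)/γ)·[sin φ + sin(2ωt+φ)] dt equals (18εηω/(k²L₀²))·((γ−1)/γ)·sin φ. In particular ⟨Ω⁽²⁾⟩ = 0 whenever sin φ = 0 or γ = 1, and its sign equals the sign of sin φ·(γ−1) (for εηω > 0). -/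
open Real MeasureTheory intervalIntegral

lemma sign_mul_pos_left {c x : ℝ} (hc : 0 < c) : Real.sign (c * x) = Real.sign x := by
  rcases lt_trichotomy x 0 with h | h | h
  · rw [Real.sign_of_neg h, Real.sign_of_neg (mul_neg_of_pos_of_neg hc h)]
  · simp [h]
  · rw [Real.sign_of_pos h, Real.sign_of_pos (mul_pos hc h)]

/-- the second-order averaged angular velocity of the
uniform-compression gait,
`⟨Ω⁽²⁾⟩ = (1/T)∫₀^T (18εηω/(k²L₀²))((γ−1)/γ)[sin φ + sin(2ωt+φ)] dt`,
equals `(18εηω/(k²L₀²))((γ−1)/γ) sin φ`; it vanishes when `sin φ = 0` or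
`γ = 1`, and for `εηω > 0` its sign is that of `sin φ (γ−1)`. -/
theorem averaged_second_order_rotation (ε η ω k L₀ γ φ T avg : ℝ)
    (hω : 0 < ω) (hT : T = 2 * π / ω) (hγ : 0 < γ) (hk : k ≠ 0) (hL : L₀ ≠ 0)
    (havg : avg = (1 / T) * ∫ t in (0:ℝ)..T,
      18 * ε * η * ω / (k ^ 2 * L₀ ^ 2) * ((γ - 1) / γ) *
        (Real.sin φ + Real.sin (2 * ω * t + φ))) :
    avg = 18 * ε * η * ω / (k ^ 2 * L₀ ^ 2) * ((γ - 1) / γ) * Real.sin φ ∧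
    (Real.sin φ = 0 ∨ γ = 1 → avg = 0) ∧
    (0 < ε * η * ω → Real.sign avg = Real.sign (Real.sin φ * (γ - 1))) := by
  have hωne : ω ≠ 0 := ne_of_gt hω
  have hTpos : 0 < T := by
    rw [hT]; positivity
  have hTne : T ≠ 0 := ne_of_gt hTpos
  have hI2 : (∫ t in (0:ℝ)..T, Real.sin (2 * ω * t + φ)) = 0 := by
    have h2ω : (2 * ω) ≠ 0 := by positivity
    have := intervalIntegral.integral_comp_mul_add Real.sin h2ω φ (a := 0) (b := T)
    rw [this, integral_sin]
    have : 2 * ω * T = 4 * π := by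
      rw [hT]; field_simp; ring
    rw [this]
    have : Real.cos (4 * π + φ) = Real.cos φ := by
      have : (4 : ℝ) * π + φ = φ + 2 * π + 2 * π := by ring
      rw [this, Real.cos_add_two_pi, Real.cos_add_two_pi]
    simp [this]
  have hmain : avg = 18 * ε * η * ω / (k ^ 2 * L₀ ^ 2) * ((γ - 1) / γ) * Real.sin φ := by
    rw [havg]
    rw [intervalIntegral.integral_const_mul, intervalIntegral.integral_add
      intervalIntegrable_const
      (Continuous.intervalIntegrable (by continuity) 0 T)]
    rw [hI2, intervalIntegral.integral_const]
    simp only [add_zero, smul_eq_mul, sub_zero]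
    field_simp
  refine ⟨hmain, ?_, ?_⟩
  · rintro (h | h) <;> rw [hmain, h] <;> simp
  · intro hpos
    rw [hmain]
    have : 18 * ε * η * ω / (k ^ 2 * L₀ ^ 2) * ((γ - 1) / γ) * Real.sin φ
        = (18 * (ε * η * ω) / (k ^ 2 * L₀ ^ 2) / γ) * (Real.sin φ * (γ - 1)) := by
      field_simp
    rw [this, sign_mul_pos_left]
    have hk2 : (0:ℝ) < k ^ 2 * L₀ ^ 2 := by positivity
    positivity
end
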